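/- With sin_q(z) = sum_{n≥0} (-1)^n q^(n^2) z^(2n+1)/[2n+1]_q! and cos_q(z) = sum_{n≥0} (-1)^n q^(n^2) z^(2n)/[2n]_q! over Q(q), the coefficient of z^(2n+1) in sin_q(z)·cos_{1/q}(z) equals (-1)^n q^(n(n-1)/2) / [2n+1]_q! · prod_{i=1}^{n} (1+q^i)^2. -/

import Mathlib

noncomputable section
open Finset PowerSeries

abbrev Fq : Type := RatFunc ℚ

/-- The variable `q` as element of the field of rational functions `ℚ(q)`. -/
def qv : Fq := RatFunc.X

/-- The q-integer `[m]_q = 1 + q + ... + q^(m-1)`. -/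
def qInt (x : Fq) (m : ℕ) : Fq := ∑ i ∈ Finset.range m, x ^ i

/-- The q-factorial `[m]_q! = [1]_q [2]_q ⋯ [m]_q`. -/
def qFact (x : Fq) (m : ℕ) : Fq := ∏ i ∈ Finset.range m, qInt x (i + 1)

/-- `sin_q(z) = ∑ (-1)^n q^(n^2) z^(2n+1)/[2n+1]_q!`. -/
def qsin (x : Fq) : PowerSeries Fq :=
  PowerSeries.mk fun m =>
    if m % 2 = 1 then (-1 : Fq) ^ (m / 2) * x ^ ((m / 2) ^ 2) / qFact x m else 0

/-- `cos_q(z) = ∑ (-1)^n q^(n^2) z^(2n)/[2n]_q!`. -/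
def qcos (x : Fq) : PowerSeries Fq :=
  PowerSeries.mk fun m =>
    if m % 2 = 0 then (-1 : Fq) ^ (m / 2) * x ^ ((m / 2) ^ 2) / qFact x m else 0

/-!
Since `[m]_{1/q}! = q^(-m(m-1)/2) [m]_q!`, the coefficient of `z^(2n+1)` times `[2n+1]_q!` is
`(-1)^n ∑_j q^(j² + (n-j)(n-j-1)) [2n+1 choose 2j+1]_q`. Up to the factor `q^(n(n+1))` this is the
odd part of Gauss's q-binomial expansion
`∏_{i<2n+1} (s + q^i t) = ∑_k q^(k(k-1)/2) [2n+1 choose k]_q t^k s^(2n+1-k)` at `s = q^n`,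
i.e. half the difference of the products at `t = 1` and `t = -1`. The product at `t = -1` has the
factor `q^n - q^n`, and the one at `t = 1` is `2 q^(n(n-1)/2 + n(n+1)) ∏_{i=1}^n (1 + q^i)^2`.
-/

theorem sum_range_two_mul {M : Type*} [AddCommMonoid M] (f : ℕ → M) (n : ℕ) :
    ∑ k ∈ range (2 * n), f k = ∑ j ∈ range n, (f (2 * j) + f (2 * j + 1)) := by
  induction n with
  | zero => simp
  | succ n ih => simp [mul_add_one, sum_range_succ, ih, add_assoc]

theorem choose_two_two_mul (a : ℕ) : (2 * a).choose 2 = a ^ 2 + a * (a - 1) := by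
  rcases a with _ | a
  · rfl
  · rw [Nat.choose_two_right, show 2 * (a + 1) - 1 = 2 * a + 1 by omega, Nat.add_sub_cancel]
    exact Nat.div_eq_of_eq_mul_left two_pos (by ring)

theorem choose_two_two_mul_add_one (j : ℕ) : (2 * j + 1).choose 2 = j * (2 * j + 1) := by
  rw [Nat.choose_two_right, Nat.add_sub_cancel]
  exact Nat.div_eq_of_eq_mul_left two_pos (by ring)

section GaussianBinomial

variable {R : Type*}

/-- The Gaussian binomial coefficient, defined by the q-Pascal rule so that no division occurs. -/
def qBinom [Semiring R] (x : R) : ℕ → ℕ → R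
  | _, 0 => 1
  | 0, _ + 1 => 0
  | m + 1, k + 1 => x ^ (k + 1) * qBinom x m (k + 1) + qBinom x m k

section CommSemiring

variable [CommSemiring R] (x : R)

@[simp] theorem qBinom_zero_right (m : ℕ) : qBinom x m 0 = 1 := by cases m <;> rfl

theorem qBinom_succ_succ (m k : ℕ) :
    qBinom x (m + 1) (k + 1) = x ^ (k + 1) * qBinom x m (k + 1) + qBinom x m k := rfl

theorem qBinom_eq_zero_of_lt : ∀ {m k : ℕ}, m < k → qBinom x m k = 0
  | 0, _ + 1, _ => rfl
  | m + 1, k + 1, h => by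
    rw [qBinom_succ_succ, qBinom_eq_zero_of_lt (by omega), qBinom_eq_zero_of_lt (by omega),
      mul_zero, add_zero]

theorem prod_add_pow_mul_eq_sum_qBinom (m : ℕ) : ∀ s t : R,
    ∏ i ∈ range m, (s + x ^ i * t) =
      ∑ k ∈ range (m + 1), x ^ k.choose 2 * t ^ k * s ^ (m - k) * qBinom x m k := by
  induction m with
  | zero => simp
  | succ m ih =>
    intro s t
    set c : ℕ → R := fun k => x ^ k.choose 2 * (x * t) ^ k * s ^ (m + 1 - k) * qBinom x m k
    have hs : (∑ k ∈ range (m + 1), x ^ k.choose 2 * (x * t) ^ k * s ^ (m - k) * qBinom x m k) * s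
        = ∑ k ∈ range (m + 1), c (k + 1) + c 0 := by
      rw [← sum_range_succ' c, sum_range_succ c, sum_mul]
      simp only [c, qBinom_eq_zero_of_lt x (Nat.lt_succ_self m), mul_zero, add_zero]
      refine sum_congr rfl fun k hk => ?_
      rw [Nat.sub_add_comm (Nat.lt_succ_iff.mp (mem_range.mp hk)), pow_succ]
      ring
    rw [prod_range_succ']
    simp_rw [pow_succ, mul_assoc _ x t]
    rw [ih, pow_zero, one_mul, mul_add, hs, sum_mul, sum_range_succ' _ (m + 1), add_right_comm,
      ← sum_add_distrib]
    congr 1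
    · refine sum_congr rfl fun k _ => ?_
      simp only [c, qBinom_succ_succ, Nat.choose_succ_succ', Nat.choose_one_right,
        Nat.add_sub_add_right]
      ring
    · simp [c]

theorem prod_range_pow_add_pow (n : ℕ) :
    ∏ i ∈ range (2 * n + 1), (x ^ n + x ^ i) =
      2 * x ^ (n.choose 2 + n * (n + 1)) * ∏ i ∈ Icc 1 n, (1 + x ^ i) ^ 2 := by
  have hlow : ∏ i ∈ range n, (x ^ n + x ^ i) =
      x ^ n.choose 2 * ∏ i ∈ range n, (1 + x ^ (i + 1)) := by
    rw [← prod_range_reflect (fun i => 1 + x ^ (i + 1)), Nat.choose_two_right, ← sum_range_id,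
      ← prod_pow_eq_pow_sum, ← prod_mul_distrib]
    refine prod_congr rfl fun i hi => ?_
    rw [mul_add, mul_one, ← pow_add, add_comm (x ^ i),
      show i + (n - 1 - i + 1) = n by have := mem_range.mp hi; omega]
  have hhigh : ∏ i ∈ range n, (x ^ n + x ^ (n + 1 + i)) =
      x ^ (n * n) * ∏ i ∈ range n, (1 + x ^ (i + 1)) := by
    rw [pow_mul, show (x ^ n) ^ n = ∏ _i ∈ range n, x ^ n by simp, ← prod_mul_distrib]
    refine prod_congr rfl fun i _ => ?_
    ring
  rw [show 2 * n + 1 = n + 1 + n by ring, prod_range_add, prod_range_succ, hlow, hhigh, prod_pow,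
    range_eq_Ico, prod_Ico_add' (fun i => 1 + x ^ i) 0 n 1, zero_add, Ico_add_one_right_eq_Icc]
  ring

end CommSemiring

theorem prod_range_pow_sub_pow_eq_zero [CommRing R] (x : R) (n : ℕ) :
    ∏ i ∈ range (2 * n + 1), (x ^ n - x ^ i) = 0 :=
  prod_eq_zero (mem_range.mpr (by omega)) (sub_self _)

theorem two_mul_sum_qBinom_odd [CommRing R] (x s : R) (n : ℕ) :
    2 * ∑ j ∈ range (n + 1),
        x ^ (2 * j + 1).choose 2 * s ^ (2 * (n - j)) * qBinom x (2 * n + 1) (2 * j + 1) =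
      ∏ i ∈ range (2 * n + 1), (s + x ^ i) - ∏ i ∈ range (2 * n + 1), (s - x ^ i) := by
  have hplus := prod_add_pow_mul_eq_sum_qBinom x (2 * n + 1) s 1
  have hminus := prod_add_pow_mul_eq_sum_qBinom x (2 * n + 1) s (-1)
  simp only [mul_one, mul_neg, ← sub_eq_add_neg] at hplus hminus
  rw [hplus, hminus, ← sum_sub_distrib, show 2 * n + 1 + 1 = 2 * (n + 1) by ring,
    sum_range_two_mul, mul_sum]
  refine sum_congr rfl fun j hj => ?_
  rw [show 2 * n + 1 - (2 * j + 1) = 2 * (n - j) by omega, (even_two_mul j).neg_one_pow,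
    (odd_two_mul_add_one j).neg_one_pow]
  ring

theorem sum_pow_mul_qBinom_odd [CommRing R] [IsDomain R] [CharZero R] {x : R} (hx : x ≠ 0)
    (n : ℕ) :
    ∑ j ∈ range (n + 1), x ^ (j ^ 2 + (n - j) * (n - j - 1)) * qBinom x (2 * n + 1) (2 * j + 1) =
      x ^ n.choose 2 * ∏ i ∈ Icc 1 n, (1 + x ^ i) ^ 2 := by
  have h := two_mul_sum_qBinom_odd x (x ^ n) n
  rw [prod_range_pow_add_pow, prod_range_pow_sub_pow_eq_zero, sub_zero] at h
  have hexp (j a : ℕ) : (2 * j + 1).choose 2 + (j + a) * (2 * a) =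
      (j + a) * (j + a + 1) + (j ^ 2 + a * (a - 1)) := by
    rcases a with _ | a
    · rw [choose_two_two_mul_add_one]; ring
    · rw [choose_two_two_mul_add_one, Nat.add_sub_cancel]; ring
  have hterm : ∀ j ∈ range (n + 1),
      x ^ (2 * j + 1).choose 2 * (x ^ n) ^ (2 * (n - j)) * qBinom x (2 * n + 1) (2 * j + 1) =
        x ^ (n * (n + 1)) * (x ^ (j ^ 2 + (n - j) * (n - j - 1)) *
          qBinom x (2 * n + 1) (2 * j + 1)) := by
    intro j hj
    obtain ⟨a, rfl⟩ := Nat.exists_eq_add_of_le (Nat.lt_succ_iff.mp (mem_range.mp hj))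
    rw [Nat.add_sub_cancel_left, ← pow_mul, ← pow_add, hexp, pow_add, mul_assoc]
  rw [sum_congr rfl hterm, ← mul_sum, pow_add] at h
  exact mul_left_cancel₀ (mul_ne_zero two_ne_zero (pow_ne_zero (n * (n + 1)) hx))
    (by linear_combination h)

end GaussianBinomial

theorem qInt_add (x : Fq) (a b : ℕ) : qInt x (a + b) = qInt x a + x ^ a * qInt x b := by
  simp only [qInt, sum_range_add, mul_sum, pow_add]

theorem qFact_succ (x : Fq) (m : ℕ) : qFact x (m + 1) = qFact x m * qInt x (m + 1) :=
  prod_range_succ _ _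

theorem qBinom_mul_qFact_mul_qFact (x : Fq) :
    ∀ {m k : ℕ}, k ≤ m → qBinom x m k * qFact x k * qFact x (m - k) = qFact x m
  | m, 0, _ => by simp [qFact]
  | m + 1, k + 1, h => by
    rw [qBinom_succ_succ, Nat.add_sub_add_right]
    obtain hk | rfl := (Nat.le_of_succ_le_succ h).lt_or_eq
    · obtain ⟨d, rfl⟩ := Nat.exists_eq_add_of_lt hk
      have h1 := qBinom_mul_qFact_mul_qFact x hk
      have h2 := qBinom_mul_qFact_mul_qFact x hk.le
      rw [show k + d + 1 - (k + 1) = d by omega, qFact_succ x k] at h1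
      rw [show k + d + 1 - k = d + 1 by omega, qFact_succ x d] at h2
      rw [show k + d + 1 - k = d + 1 by omega, qFact_succ x (k + d + 1), qFact_succ x d,
        qFact_succ x k, show k + d + 1 + 1 = (k + 1) + (d + 1) by ring, qInt_add x (k + 1) (d + 1)]
      linear_combination (x ^ (k + 1) * qInt x (d + 1)) * h1 + qInt x (k + 1) * h2
    · have h := qBinom_mul_qFact_mul_qFact x (le_refl k)
      rw [Nat.sub_self] at h
      rw [qBinom_eq_zero_of_lt x k.lt_succ_self, Nat.sub_self, qFact_succ x k]
      linear_combination qInt x (k + 1) * h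

theorem qInt_inv_mul_pow {x : Fq} (hx : x ≠ 0) (m : ℕ) :
    qInt x⁻¹ (m + 1) * x ^ m = qInt x (m + 1) := by
  rw [qInt, qInt, sum_mul, ← sum_range_reflect (fun i => x ^ i)]
  refine sum_congr rfl fun i hi => ?_
  rw [inv_pow, inv_mul_eq_iff_eq_mul₀ (pow_ne_zero i hx), ← pow_add,
    show i + (m + 1 - 1 - i) = m by have := mem_range.mp hi; omega]

theorem qFact_inv_mul_pow {x : Fq} (hx : x ≠ 0) (m : ℕ) :
    qFact x⁻¹ m * x ^ m.choose 2 = qFact x m := by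
  induction m with
  | zero => simp [qFact]
  | succ m ih =>
    rw [qFact_succ, qFact_succ, ← ih, ← qInt_inv_mul_pow hx, Nat.choose_succ_succ',
      Nat.choose_one_right, pow_add]
    ring

theorem qv_ne_zero : qv ≠ 0 := RatFunc.X_ne_zero

theorem qInt_qv_ne_zero {m : ℕ} (hm : m ≠ 0) : qInt qv m ≠ 0 := by
  have hpoly : qInt qv m = algebraMap (Polynomial ℚ) Fq (∑ i ∈ range m, Polynomial.X ^ i) := by
    simp [qInt, qv, map_sum, RatFunc.algebraMap_X]
  rw [hpoly]
  refine RatFunc.algebraMap_ne_zero fun h => hm ?_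
  simpa [Polynomial.eval_geom_sum] using congrArg (Polynomial.eval 1) h

theorem qFact_qv_ne_zero (m : ℕ) : qFact qv m ≠ 0 :=
  prod_ne_zero_iff.mpr fun i _ => qInt_qv_ne_zero i.succ_ne_zero

theorem coeff_qsin_two_mul (x : Fq) (j : ℕ) : coeff (2 * j) (qsin x) = 0 := by
  simp [qsin, Nat.mul_mod_right]

theorem coeff_qsin_two_mul_add_one (x : Fq) (j : ℕ) :
    coeff (2 * j + 1) (qsin x) = (-1) ^ j * x ^ (j ^ 2) / qFact x (2 * j + 1) := by
  rw [qsin, coeff_mk, if_pos (by omega), show (2 * j + 1) / 2 = j by omega]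

theorem coeff_qcos_two_mul (x : Fq) (a : ℕ) :
    coeff (2 * a) (qcos x) = (-1) ^ a * x ^ (a ^ 2) / qFact x (2 * a) := by
  rw [qcos, coeff_mk, if_pos (by omega), show 2 * a / 2 = a by omega]

theorem coeff_qcos_inv_two_mul {x : Fq} (hx : x ≠ 0) (a : ℕ) :
    coeff (2 * a) (qcos x⁻¹) = (-1) ^ a * x ^ (a * (a - 1)) / qFact x (2 * a) := by
  rw [coeff_qcos_two_mul, ← qFact_inv_mul_pow hx, choose_two_two_mul, pow_add, ← mul_assoc,
    mul_div_mul_right _ _ (pow_ne_zero _ hx), inv_pow]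
  ring

theorem coeff_qsin_mul (x : Fq) (f : PowerSeries Fq) (n : ℕ) :
    coeff (2 * n + 1) (qsin x * f) =
      ∑ j ∈ range (n + 1), coeff (2 * j + 1) (qsin x) * coeff (2 * (n - j)) f := by
  rw [coeff_mul, Nat.sum_antidiagonal_eq_sum_range_succ (fun i k => coeff i (qsin x) * coeff k f),
    Nat.succ_eq_add_one, show 2 * n + 1 + 1 = 2 * (n + 1) by ring, sum_range_two_mul]
  refine sum_congr rfl fun j hj => ?_
  rw [coeff_qsin_two_mul, zero_mul, zero_add, show 2 * n + 1 - (2 * j + 1) = 2 * (n - j) by omega]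

theorem coeff_qsin_mul_coeff_qcos_inv {x : Fq} (hx : x ≠ 0) (hfact : ∀ m, qFact x m ≠ 0)
    {n j : ℕ} (hj : j ≤ n) :
    coeff (2 * j + 1) (qsin x) * coeff (2 * (n - j)) (qcos x⁻¹) =
      (-1) ^ n * (x ^ (j ^ 2 + (n - j) * (n - j - 1)) * qBinom x (2 * n + 1) (2 * j + 1)) /
        qFact x (2 * n + 1) := by
  have hsplit := qBinom_mul_qFact_mul_qFact x (show 2 * j + 1 ≤ 2 * n + 1 by omega)
  rw [show 2 * n + 1 - (2 * j + 1) = 2 * (n - j) by omega] at hsplit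
  have hsign : (-1 : Fq) ^ n = (-1) ^ j * (-1) ^ (n - j) := by
    rw [← pow_add, Nat.add_sub_cancel' hj]
  rw [coeff_qsin_two_mul_add_one, coeff_qcos_inv_two_mul hx, ← hsplit, pow_add, hsign]
  have hbinom := left_ne_zero_of_mul (left_ne_zero_of_mul (hsplit ▸ hfact (2 * n + 1)))
  have hodd := hfact (2 * j + 1)
  have heven := hfact (2 * (n - j))
  field_simp

theorem coeff_sin_q_mul_cos_inv_q (n : ℕ) :
    PowerSeries.coeff (R := Fq) (2 * n + 1) (qsin qv * qcos qv⁻¹) =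
      (-1 : Fq) ^ n * qv ^ (n * (n - 1) / 2) / qFact qv (2 * n + 1) *
        ∏ i ∈ Finset.Icc 1 n, (1 + qv ^ i) ^ 2 := by
  rw [coeff_qsin_mul, sum_congr rfl fun j hj => coeff_qsin_mul_coeff_qcos_inv qv_ne_zero
    qFact_qv_ne_zero (Nat.lt_succ_iff.mp (mem_range.mp hj)), ← sum_div, ← mul_sum,
    sum_pow_mul_qBinom_odd qv_ne_zero, Nat.choose_two_right]
  ring
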